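/- arXiv:1507.07133 — 2 statements merged into one kernel-verified Lean document; each statement's English description precedes it below -/
import Mathlib

section
/- Define F(r,v,C) = (r+v, R[C(r+v)]·v, flip_{r+v}(C)) and G(r,v,C) = (r − R[C(r)]·v, R[C(r)]·v, flip_r(C)), where flip_h(C) is the configuration agreeing with C except negated at h, and R[z] is rotation by −πz/3 for z ∈ {−1,1}. Then G(F(r,v,C)) = (r,v,C) for every state (r,v,C). -/
open Real Matrix

/-- Rotation by angle `-πz/3`. -/
noncomputable def rot (z : ℤ) : Matrix (Fin 2) (Fin 2) ℝ :=
  !![Real.cos (π * z / 3), Real.sin (π * z / 3);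
     -Real.sin (π * z / 3), Real.cos (π * z / 3)]

/-- A state: position, velocity, and scatterer configuration. -/
abbrev FRState : Type := (Fin 2 → ℝ) × (Fin 2 → ℝ) × ((Fin 2 → ℝ) → ℤ)

/-- Flip the scatterer at site `h`. -/
noncomputable def flipAt (h : Fin 2 → ℝ) (C : (Fin 2 → ℝ) → ℤ) : (Fin 2 → ℝ) → ℤ :=
  fun h' => if h' = h then -C h' else C h'

/-- The forward one-step map `F(r,v,C) = (r+v, R[C(r+v)]·v, flip_{r+v}(C))`. -/
noncomputable def Fwd (s : FRState) : FRState :=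
  ⟨s.1 + s.2.1, (rot (s.2.2 (s.1 + s.2.1))).mulVec s.2.1, flipAt (s.1 + s.2.1) s.2.2⟩

/-- The backward map `G(r,v,C) = (r − R[C(r)]·v, R[C(r)]·v, flip_r(C))`. -/
noncomputable def Bwd (s : FRState) : FRState :=
  ⟨s.1 - (rot (s.2.2 s.1)).mulVec s.2.1, (rot (s.2.2 s.1)).mulVec s.2.1, flipAt s.1 s.2.2⟩

lemma flipAt_apply_self (h : Fin 2 → ℝ) (C : (Fin 2 → ℝ) → ℤ) : flipAt h C h = -C h :=
  if_pos rfl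

lemma flipAt_flipAt (h : Fin 2 → ℝ) (C : (Fin 2 → ℝ) → ℤ) : flipAt h (flipAt h C) = C := by
  funext h'
  by_cases hh : h' = h <;> simp [flipAt, hh]

lemma rot_neg_mul_rot (z : ℤ) : rot (-z) * rot z = 1 := by
  have hcos : Real.cos (π * ((-z : ℤ) : ℝ) / 3) = Real.cos (π * z / 3) := by
    rw [Int.cast_neg, mul_neg, neg_div, Real.cos_neg]
  have hsin : Real.sin (π * ((-z : ℤ) : ℝ) / 3) = -Real.sin (π * z / 3) := by
    rw [Int.cast_neg, mul_neg, neg_div, Real.sin_neg]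
  have hpyth := Real.sin_sq_add_cos_sq (π * z / 3)
  rw [rot, rot, hcos, hsin]
  ext i j
  fin_cases i <;> fin_cases j <;> simp [Matrix.mul_apply, Fin.sum_univ_two] <;> linarith

lemma rot_neg_mulVec_rot_mulVec (z : ℤ) (v : Fin 2 → ℝ) :
    rot (-z) *ᵥ (rot z *ᵥ v) = v := by
  rw [mulVec_mulVec, rot_neg_mul_rot, one_mulVec]

/-- Time-Reversal proposition: `G(F(r,v,C)) = (r,v,C)` for every state. -/
theorem bwd_fwd_eq_id (s : FRState) : Bwd (Fwd s) = s := by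
  obtain ⟨r, v, C⟩ := s
  simp only [Fwd, Bwd, flipAt_apply_self, rot_neg_mulVec_rot_mulVec, add_sub_cancel_right,
    flipAt_flipAt]
end

section
/- Suppose the particle's position sequence r : ℕ → ℍ satisfies: there is an increasing sequence of times τ₀ = 0 < τ₁ < τ₂ < ... with r(τ_i) = r(0) for all i, and on each interval [τ_{i-1}, τ_i) the positions are pairwise distinct (self-avoiding cycles based at the origin). Then any loop L = T[t₁, t₂] with r(t₁) = r(t₂) and r(t) ≠ r(t₁) for t₁ < t < t₂, where t₁ > 0 and r(t₁) ≠ r(0), must span a return to the origin: there exists some τ_i with t₁ < τ_i < t₂. -/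
/-- If the trajectory decomposes into self-avoiding cycles based at the origin
(times `τ₀ = 0 < τ₁ < τ₂ < ⋯` with `r (τ i) = r 0` and `r` injective on each
interval `[τ i, τ (i+1))`), then any loop `T[t₁,t₂]` based away from the origin
(`t₁ > 0`, `r t₁ = r t₂`, `r t₁ ≠ r 0`, interior positions distinct from the base)
must span a return to the origin: some `τ i` satisfies `t₁ < τ i < t₂`. -/
theorem loop_spans_return {α : Type*} (r : ℕ → α) (τ : ℕ → ℕ)
    (hτ0 : τ 0 = 0) (hmono : StrictMono τ)
    (hbase : ∀ i, r (τ i) = r 0)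
    (hinj : ∀ i, Set.InjOn r (Set.Ico (τ i) (τ (i + 1))))
    (t₁ t₂ : ℕ) (ht : t₁ < t₂) (h0 : 0 < t₁)
    (hloop : r t₁ = r t₂) (hint : ∀ t, t₁ < t → t < t₂ → r t ≠ r t₁)
    (hne : r t₁ ≠ r 0) :
    ∃ i, t₁ < τ i ∧ τ i < t₂ := by
  by_contra hcon
  push_neg at hcon
  have hex : ∃ n, t₁ < τ n := ⟨t₁ + 1, lt_of_lt_of_le (Nat.lt_succ_self t₁) (hmono.le_apply)⟩
  classical
  let m := Nat.find hex
  have hm : t₁ < τ m := Nat.find_spec hex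
  have hmpos : 0 < m := by
    rcases Nat.eq_zero_or_pos m with h | h
    · exfalso; have := hm; rw [h, hτ0] at this; omega
    · exact h
  have hi : τ (m - 1) ≤ t₁ :=
    le_of_not_gt (Nat.find_min hex (Nat.sub_lt hmpos one_pos))
  have hmm : m - 1 + 1 = m := Nat.succ_pred_eq_of_pos hmpos
  have ht2 : t₂ ≤ τ m := hcon m hm
  have ht2' : t₂ ≠ τ m := by
    intro h
    exact hne (by rw [hloop, h, hbase m])
  have ht2lt : t₂ < τ m := lt_of_le_of_ne ht2 ht2'
  have h1 : t₁ ∈ Set.Ico (τ (m - 1)) (τ (m - 1 + 1)) := ⟨hi, by rw [hmm]; omega⟩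
  have h2 : t₂ ∈ Set.Ico (τ (m - 1)) (τ (m - 1 + 1)) := ⟨by omega, by rw [hmm]; omega⟩
  have := hinj (m - 1) h1 h2 hloop
  omega
end
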